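/- tr(F_A∧Q₀ + Q₀∧F_A) = 0. -/

import Mathlib

open Matrix

noncomputable section

variable {R : Type*} [CommRing R] {M : Type*} [AddCommGroup M] [Module R M]

/-- `x` is a degree-1 element of the exterior algebra `Λ(M)`, i.e. it lies in the image of
the canonical inclusion `ι : M → Λ(M)`. -/
def IsDeg1 (x : ExteriorAlgebra R M) : Prop :=
  ∃ m : M, ExteriorAlgebra.ι R m = x

/-- `x` is a degree-2 element of the exterior algebra `Λ(M)`, i.e. an `R`-linear combination
of products of two degree-1 elements. -/
def IsDeg2 (x : ExteriorAlgebra R M) : Prop :=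
  x ∈ (LinearMap.range (ExteriorAlgebra.ι R (M := M)) ^ 2 :
    Submodule R (ExteriorAlgebra R M))

/-- For a 3×1 vector `a`, `box a = [a]` is the 3×3 matrix with rows
`(0, a₃, −a₂)`, `(−a₃, 0, a₁)`, `(a₂, −a₁, 0)`. -/
def box (a : Matrix (Fin 3) (Fin 1) (ExteriorAlgebra R M)) :
    Matrix (Fin 3) (Fin 3) (ExteriorAlgebra R M) :=
  !![0, a 2 0, -(a 1 0); -(a 2 0), 0, a 0 0; a 1 0, -(a 0 0), 0]

/-- The cross product `a × b` of 3×1 vectors over the exterior algebra. -/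
def cross (a b : Matrix (Fin 3) (Fin 1) (ExteriorAlgebra R M)) :
    Matrix (Fin 3) (Fin 1) (ExteriorAlgebra R M) :=
  !![a 1 0 * b 2 0 - a 2 0 * b 1 0;
     a 2 0 * b 0 0 - a 0 0 * b 2 0;
     a 0 0 * b 1 0 - a 1 0 * b 0 0]

/-- `ω = e₁∧f₁ + e₂∧f₂ + e₃∧f₃`. -/
def om (e f : Matrix (Fin 3) (Fin 1) (ExteriorAlgebra R M)) : ExteriorAlgebra R M :=
  e 0 0 * f 0 0 + e 1 0 * f 1 0 + e 2 0 * f 2 0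

/-- `ImΩ = f₁∧e₂∧e₃ + f₂∧e₃∧e₁ + f₃∧e₁∧e₂ − f₁∧f₂∧f₃`. -/
def imOm (e f : Matrix (Fin 3) (Fin 1) (ExteriorAlgebra R M)) : ExteriorAlgebra R M :=
  f 0 0 * e 1 0 * e 2 0 + f 1 0 * e 2 0 * e 0 0 + f 2 0 * e 0 0 * e 1 0
    - f 0 0 * f 1 0 * f 2 0

/-- A 7×7 matrix assembled from blocks of sizes 1, 3, 3. -/
def blk {α : Type*} (P : Matrix (Fin 1) (Fin 1) α) (Q S : Matrix (Fin 1) (Fin 3) α)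
    (T : Matrix (Fin 3) (Fin 1) α) (U V : Matrix (Fin 3) (Fin 3) α)
    (W : Matrix (Fin 3) (Fin 1) α) (X Y : Matrix (Fin 3) (Fin 3) α) :
    Matrix (Fin 1 ⊕ (Fin 3 ⊕ Fin 3)) (Fin 1 ⊕ (Fin 3 ⊕ Fin 3)) α :=
  Matrix.fromBlocks P (Matrix.fromCols Q S) (Matrix.fromRows T W)
    (Matrix.fromBlocks U V X Y)

/-- The 3×3 scalar diagonal matrix `x·I₃`. -/
def dg {α : Type*} [Zero α] (x : α) : Matrix (Fin 3) (Fin 3) α :=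
  Matrix.diagonal fun _ => x

/-- The 7×7 block matrix `𝓘 = [[0,0,0],[0,0,−I],[0,I,0]]`. -/
def calI (α : Type*) [Ring α] :
    Matrix (Fin 1 ⊕ (Fin 3 ⊕ Fin 3)) (Fin 1 ⊕ (Fin 3 ⊕ Fin 3)) α :=
  blk 0 0 0 0 0 (-1) 0 1 0

/-- `B = [[0, fᵀ, −eᵀ], [−f, 0, −e₀I], [e, e₀I, 0]]`. -/
def Bmat (e f : Matrix (Fin 3) (Fin 1) (ExteriorAlgebra R M)) (e0 : ExteriorAlgebra R M) :
    Matrix (Fin 1 ⊕ (Fin 3 ⊕ Fin 3)) (Fin 1 ⊕ (Fin 3 ⊕ Fin 3)) (ExteriorAlgebra R M) :=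
  blk 0 (fᵀ) (-(eᵀ)) (-f) 0 (-(dg e0)) e (dg e0) 0

/-- `C = [[0, fᵀ, −eᵀ], [−f, −[e], e₀I+[f]], [e, −e₀I+[f], [e]]]`. -/
def Cmat (e f : Matrix (Fin 3) (Fin 1) (ExteriorAlgebra R M)) (e0 : ExteriorAlgebra R M) :
    Matrix (Fin 1 ⊕ (Fin 3 ⊕ Fin 3)) (Fin 1 ⊕ (Fin 3 ⊕ Fin 3)) (ExteriorAlgebra R M) :=
  blk 0 (fᵀ) (-(eᵀ)) (-f) (-(box e)) (dg e0 + box f) e (-(dg e0) + box f) (box e)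

/-- `F_A = [[0,0,0],[0,α,β],[0,−β,α]]`. -/
def FA (a b : Matrix (Fin 3) (Fin 3) (ExteriorAlgebra R M)) :
    Matrix (Fin 1 ⊕ (Fin 3 ⊕ Fin 3)) (Fin 1 ⊕ (Fin 3 ⊕ Fin 3)) (ExteriorAlgebra R M) :=
  blk 0 0 0 0 a b 0 (-b) a

/-- `Q₋^δ = e₀ ∧ [[0, (1+δ)eᵀ, (1+δ)fᵀ], [−(1+δ)e, −2δ[f], −2δ[e]], [−(1+δ)f, −2δ[e], 2δ[f]]]`. -/
def Qminus (e f : Matrix (Fin 3) (Fin 1) (ExteriorAlgebra R M)) (e0 : ExteriorAlgebra R M)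
    (δ : R) :
    Matrix (Fin 1 ⊕ (Fin 3 ⊕ Fin 3)) (Fin 1 ⊕ (Fin 3 ⊕ Fin 3)) (ExteriorAlgebra R M) :=
  (blk 0 ((1 + δ) • (eᵀ)) ((1 + δ) • (fᵀ))
      (-((1 + δ) • e)) (-((2 * δ) • box f)) (-((2 * δ) • box e))
      (-((1 + δ) • f)) (-((2 * δ) • box e)) ((2 * δ) • box f)).map fun x => e0 * x

/-- `Q₊^δ`. -/
def Qplus (e f : Matrix (Fin 3) (Fin 1) (ExteriorAlgebra R M)) (δ : R) :
    Matrix (Fin 1 ⊕ (Fin 3 ⊕ Fin 3)) (Fin 1 ⊕ (Fin 3 ⊕ Fin 3)) (ExteriorAlgebra R M) :=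
  blk 0 ((2 * δ) • ((cross e f)ᵀ)) (δ • ((cross e e - cross f f)ᵀ))
    (-((2 * δ) • cross e f)) (-((1 + δ) • (f * (fᵀ)))) ((1 + δ) • (f * (eᵀ)))
    (-(δ • (cross e e - cross f f))) ((1 + δ) • (e * (fᵀ))) (-((1 + δ) • (e * (eᵀ))))

/-- `Q₀`. -/
def Qzero [Algebra ℚ R] (e f : Matrix (Fin 3) (Fin 1) (ExteriorAlgebra R M)) :
    Matrix (Fin 1 ⊕ (Fin 3 ⊕ Fin 3)) (Fin 1 ⊕ (Fin 3 ⊕ Fin 3)) (ExteriorAlgebra R M) :=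
  (algebraMap ℚ R (1/2)) •
    blk 0 0 0
      0 (-(box (cross e e + cross f f))) (-((2 : R) • (box e * box f - box f * box e)))
      0 ((2 : R) • (box e * box f - box f * box e)) (-(box (cross e e + cross f f)))

/-!
Entries of `α` and `β` have degree 2, hence are central in `Λ(M)`; so `tr(Q₀ F_A) = tr(F_A Q₀)`
and it suffices that `tr(F_A Q₀) = 0`. Block multiplication gives
`tr(F_A Q₀) = -tr(α S) + 2 tr(β T)` with `S = [e×e + f×f]` and `T = [e][f] - [f][e]`.
In any ring `tr(X [a×b]) = ((X - Xᵀ) a)ᵀ b` and `tr(Y [a][b]) = (Yᵀ a)ᵀ b - tr Y · aᵀ b`, so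
`αᵀ = -α`, `βᵀ = β` and `tr β = 0` turn this into `-2 ((α e + β f)ᵀ e + (α f - β e)ᵀ f)`,
which vanishes by the two linear constraints.
-/

theorem Matrix.trace_mul_comm_of_commute {ι A : Type*} [Fintype ι] [NonUnitalNonAssocSemiring A]
    (X Y : Matrix ι ι A) (h : ∀ i j, Commute (X i j) (Y j i)) :
    trace (X * Y) = trace (Y * X) := by
  simp only [trace, diag, mul_apply]
  rw [Finset.sum_comm]
  exact Finset.sum_congr rfl fun i _ => Finset.sum_congr rfl fun j _ => (h j i).eq

theorem trace_blk_mul_blk {A : Type*} [Semiring A]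
    (U V X Y U' V' X' Y' : Matrix (Fin 3) (Fin 3) A) :
    trace (blk 0 0 0 0 U V 0 X Y * blk 0 0 0 0 U' V' 0 X' Y') =
      trace (U * U' + V * X') + trace (X * V' + Y * Y') := by
  simp [blk, fromCols_zero, fromRows_zero, fromBlocks_multiply, trace, Fintype.sum_sum_type]

theorem IsDeg2.commute {y : ExteriorAlgebra R M} (hy : IsDeg2 y) (z : ExteriorAlgebra R M) :
    Commute y z := by
  have anticomm (m n : M) : ExteriorAlgebra.ι R m * ExteriorAlgebra.ι R n =
      -(ExteriorAlgebra.ι R n * ExteriorAlgebra.ι R m) :=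
    eq_neg_of_add_eq_zero_left (ExteriorAlgebra.ι_add_mul_swap m n)
  have hι (x : M) : Commute y (ExteriorAlgebra.ι R x) := by
    rw [IsDeg2, pow_two] at hy
    refine Submodule.mul_induction_on hy ?_ fun _ _ ha hb => (ha.add_left hb)
    rintro _ ⟨m, rfl⟩ _ ⟨n, rfl⟩
    rw [Commute, SemiconjBy, mul_assoc, anticomm n x, mul_neg, ← mul_assoc, anticomm m x,
      neg_mul, neg_neg, mul_assoc]
  induction z using ExteriorAlgebra.induction with
  | algebraMap r => exact (Algebra.commutes r y).symm
  | ι x => exact hι x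
  | mul a b ha hb => exact ha.mul_right hb
  | add a b ha hb => exact ha.add_right hb

theorem isDeg2_FA_apply {α β : Matrix (Fin 3) (Fin 3) (ExteriorAlgebra R M)}
    (hα : ∀ i j, IsDeg2 (α i j)) (hβ : ∀ i j, IsDeg2 (β i j))
    (i j : Fin 1 ⊕ (Fin 3 ⊕ Fin 3)) : IsDeg2 (FA α β i j) := by
  rcases i with i | i | i <;> rcases j with j | j | j <;>
    simp only [FA, blk, fromBlocks_apply₁₁, fromBlocks_apply₁₂, fromBlocks_apply₂₁,
      fromBlocks_apply₂₂, fromCols_zero, fromRows_zero, Matrix.zero_apply, Matrix.neg_apply]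
  all_goals first | exact zero_mem _ | exact hα _ _ | exact hβ _ _ | exact neg_mem (hβ _ _)

theorem box_add (a b : Matrix (Fin 3) (Fin 1) (ExteriorAlgebra R M)) :
    box (a + b) = box a + box b := by
  ext i j
  fin_cases i <;> fin_cases j <;> simp [box, add_comm]

theorem box_cross_apply (a b : Matrix (Fin 3) (Fin 1) (ExteriorAlgebra R M)) (i j : Fin 3) :
    box (cross a b) i j = a i 0 * b j 0 - a j 0 * b i 0 := by
  fin_cases i <;> fin_cases j <;> simp [box, cross]

theorem box_mul_box_apply (a b : Matrix (Fin 3) (Fin 1) (ExteriorAlgebra R M)) (i j : Fin 3) :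
    (box a * box b) i j = a j 0 * b i 0 - if i = j then (aᵀ * b) 0 0 else 0 := by
  fin_cases i <;> fin_cases j <;> simp [box, mul_apply, Fin.sum_univ_three] <;> abel

theorem trace_mul_box_cross (X : Matrix (Fin 3) (Fin 3) (ExteriorAlgebra R M))
    (a b : Matrix (Fin 3) (Fin 1) (ExteriorAlgebra R M)) :
    trace (X * box (cross a b)) = (((X - Xᵀ) * a)ᵀ * b) 0 0 := by
  simp only [trace, diag, mul_apply, box_cross_apply, transpose_apply, Matrix.sub_apply, mul_sub,
    sub_mul, Finset.sum_sub_distrib, Finset.sum_mul, mul_assoc]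
  exact congrArg _ Finset.sum_comm

theorem trace_mul_box_mul_box (Y : Matrix (Fin 3) (Fin 3) (ExteriorAlgebra R M))
    (a b : Matrix (Fin 3) (Fin 1) (ExteriorAlgebra R M)) :
    trace (Y * (box a * box b)) = ((Yᵀ * a)ᵀ * b) 0 0 - trace Y * (aᵀ * b) 0 0 := by
  simp only [trace, diag, mul_apply (M := Y), box_mul_box_apply, mul_sub, mul_ite, mul_zero,
    Finset.sum_sub_distrib, Finset.sum_ite_eq', Finset.mem_univ, if_true]
  simp only [mul_apply, transpose_apply, Finset.sum_mul, mul_assoc]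
  rw [Finset.sum_comm]

theorem trace_FA_mul_Qzero [Algebra ℚ R] (e f : Matrix (Fin 3) (Fin 1) (ExteriorAlgebra R M))
    {α β : Matrix (Fin 3) (Fin 3) (ExteriorAlgebra R M)}
    (hαt : αᵀ = -α) (hβt : βᵀ = β) (hβtr : trace β = 0)
    (h1 : α * e + β * f = 0) (h2 : α * f - β * e = 0) :
    trace (FA α β * Qzero e f) = 0 := by
  have hS : trace (α * box (cross e e + cross f f)) =
      (2 : R) • ((α * e)ᵀ * e + (α * f)ᵀ * f) 0 0 := by
    rw [box_add, Matrix.mul_add, trace_add, trace_mul_box_cross, trace_mul_box_cross, hαt,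
      sub_neg_eq_add, ← two_smul R α]
    simp [Matrix.smul_mul, transpose_smul]
  have hT : trace (β * (box e * box f - box f * box e)) = ((β * e)ᵀ * f - (β * f)ᵀ * e) 0 0 := by
    rw [Matrix.mul_sub, trace_sub, trace_mul_box_mul_box, trace_mul_box_mul_box, hβt, hβtr]
    simp
  have hc : ((α * e + β * f)ᵀ * e + (α * f - β * e)ᵀ * f) 0 0 = 0 := by simp [h1, h2]
  rw [Qzero, Matrix.mul_smul, trace_smul]
  refine smul_eq_zero_of_right _ ?_
  rw [FA, trace_blk_mul_blk]
  simp only [trace_add, Matrix.mul_neg, Matrix.neg_mul, Matrix.mul_smul, trace_neg, trace_smul,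
    hS, hT]
  simp only [transpose_add, transpose_sub, Matrix.add_mul, Matrix.sub_mul, Matrix.add_apply,
    Matrix.sub_apply] at hc ⊢
  linear_combination (norm := module) (-4 : R) • hc

theorem stmt15_general [Algebra ℚ R] (e f : Matrix (Fin 3) (Fin 1) (ExteriorAlgebra R M))
    (α β : Matrix (Fin 3) (Fin 3) (ExteriorAlgebra R M))
    (hα : ∀ i j, IsDeg2 (α i j)) (hβ : ∀ i j, IsDeg2 (β i j))
    (hαt : αᵀ = -α) (hβt : βᵀ = β) (hβtr : Matrix.trace β = 0)
    (h1 : α * e + β * f = 0) (h2 : α * f - β * e = 0) :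
    Matrix.trace (FA α β * Qzero e f + Qzero e f * FA α β) = 0 := by
  rw [trace_add, ← trace_mul_comm_of_commute _ _ fun i j => (isDeg2_FA_apply hα hβ i j).commute _,
    trace_FA_mul_Qzero e f hαt hβt hβtr h1 h2, add_zero]

theorem stmt15 [Algebra ℚ R] (e f : Matrix (Fin 3) (Fin 1) (ExteriorAlgebra R M))
    (he : ∀ i, IsDeg1 (e i 0)) (hf : ∀ i, IsDeg1 (f i 0))
    (α β : Matrix (Fin 3) (Fin 3) (ExteriorAlgebra R M))
    (hα : ∀ i j, IsDeg2 (α i j)) (hβ : ∀ i j, IsDeg2 (β i j))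
    (hαt : αᵀ = -α) (hβt : βᵀ = β) (hβtr : Matrix.trace β = 0)
    (h1 : α * e + β * f = 0) (h2 : α * f - β * e = 0) :
    Matrix.trace (FA α β * Qzero e f + Qzero e f * FA α β) = 0 :=
  stmt15_general e f α β hα hβ hαt hβt hβtr h1 h2

end
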